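/- arXiv:2405.06825 — 6 statements merged into one kernel-verified Lean document; each statement's English description precedes it below -/
import Mathlib

section
/- Let K be a perfect field with algebraic closure K̄ and let K'/K be a finite extension inside K̄. Let G be a finite group such that for every natural number n the direct power Gⁿ is realisable as a Galois group over K (i.e., there is a finite Galois extension of K with Galois group isomorphic to Gⁿ). Then for every natural number m, the group Gᵐ is realisable as a Galois group over K'. -/
/-!
Take `E/K` realising `Gⁿ` with `n = m + [K' : K]`. The compositum `EK'` is Galois over `K'`, and
restriction embeds `Gal(EK'/K')` into `Gal(E/K) ≅ Gⁿ` as a subgroup of index at most `[K' : K]`,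
because `[EK' : K'] ≥ [E : K] / [K' : K]`. Splitting off one factor of `Gⁿ` at a time, a subgroup
either contains that whole factor or has at least twice the index of its projection, so a subgroup
of index `i` surjects onto some `Gᵏ` with `2ⁿ ≤ 2ᵏ i`. Hence a subgroup of index at most `d` in
`G^(m + d)` surjects onto `Gᵐ`, and the corresponding fixed field realises `Gᵐ` over `K'`.
-/

open IntermediateField Polynomial Module

def MulEquiv.piFinSucc (n : ℕ) (G : Type*) [Monoid G] : (Fin (n + 1) → G) ≃* G × (Fin n → G) :=
  { (Fin.consEquiv fun _ ↦ G).symm with map_mul' := fun _ _ ↦ rfl }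

namespace Subgroup

variable {G A : Type*} [Group G] [Group A]

theorem le_top_prod_map_snd (H : Subgroup (G × A)) :
    H ≤ (⊤ : Subgroup G).prod (H.map (MonoidHom.snd G A)) :=
  fun x hx ↦ mem_prod.mpr ⟨mem_top _, x, hx, rfl⟩

theorem eq_top_prod_map_snd_or_two_mul_index_le (H : Subgroup (G × A)) [H.FiniteIndex] :
    H = (⊤ : Subgroup G).prod (H.map (MonoidHom.snd G A)) ∨
      2 * (H.map (MonoidHom.snd G A)).index ≤ H.index := by
  refine or_iff_not_imp_left.mpr fun hne ↦ ?_
  have hle := H.le_top_prod_map_snd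
  have hmul := relIndex_mul_index hle
  rw [index_prod, index_top, one_mul] at hmul
  have h0 : H.relIndex ((⊤ : Subgroup G).prod (H.map (MonoidHom.snd G A))) ≠ 0 :=
    left_ne_zero_of_mul (hmul ▸ FiniteIndex.index_ne_zero)
  have h1 : H.relIndex ((⊤ : Subgroup G).prod (H.map (MonoidHom.snd G A))) ≠ 1 :=
    fun h ↦ hne (le_antisymm hle (relIndex_eq_one.mp h))
  rw [← hmul]
  gcongr
  omega

theorem exists_surjective_prod_of_eq_top_prod {Q : Type*} [Group Q] {H : Subgroup (G × A)}
    (hH : H = (⊤ : Subgroup G).prod (H.map (MonoidHom.snd G A)))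
    {f : H.map (MonoidHom.snd G A) →* Q} (hf : Function.Surjective f) :
    ∃ g : H →* G × Q, Function.Surjective g := by
  refine ⟨((MonoidHom.fst G A).comp H.subtype).prod (f.comp ((MonoidHom.snd G A).subgroupMap H)),
    fun ⟨a, q⟩ ↦ ?_⟩
  obtain ⟨⟨b, hb⟩, rfl⟩ := hf q
  exact ⟨⟨(a, b), hH ▸ mem_prod.mpr ⟨mem_top a, hb⟩⟩, rfl⟩

theorem exists_surjective_pi_two_pow_le_index [Finite G] :
    ∀ {n : ℕ} (H : Subgroup (Fin n → G)), ∃ (m : ℕ) (f : H →* (Fin m → G)),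
      Function.Surjective f ∧ 2 ^ n ≤ 2 ^ m * H.index
  | 0, H => ⟨0, 1, fun _ ↦ ⟨1, Subsingleton.elim _ _⟩, by
      simpa using Nat.one_le_iff_ne_zero.mpr index_ne_zero_of_finite⟩
  | n + 1, H => by
    let e := MulEquiv.piFinSucc n G
    let H' := H.map e.toMonoidHom
    have hH' : H'.index = H.index := index_map_equiv H e
    obtain ⟨m, f, hf, hB⟩ := exists_surjective_pi_two_pow_le_index (H'.map (MonoidHom.snd G _))
    rcases H'.eq_top_prod_map_snd_or_two_mul_index_le with hprod | hidx
    · obtain ⟨g, hg⟩ := exists_surjective_prod_of_eq_top_prod hprod hf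
      refine ⟨m + 1, (MulEquiv.piFinSucc m G).symm.toMonoidHom.comp
        (g.comp (e.subgroupMap H).toMonoidHom),
        (MulEquiv.piFinSucc m G).symm.surjective.comp (hg.comp (e.subgroupMap H).surjective), ?_⟩
      rw [← hH', hprod, index_prod, index_top, one_mul, pow_succ, pow_succ, mul_right_comm]
      exact Nat.mul_le_mul_right 2 hB
    · refine ⟨m, (f.comp ((MonoidHom.snd G _).subgroupMap H')).comp (e.subgroupMap H).toMonoidHom,
        (hf.comp (MonoidHom.subgroupMap_surjective _ _)).comp (e.subgroupMap H).surjective, ?_⟩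
      calc 2 ^ (n + 1) = 2 * 2 ^ n := pow_succ' 2 n
        _ ≤ 2 * (2 ^ m * (H'.map (MonoidHom.snd G _)).index) := Nat.mul_le_mul_left 2 hB
        _ = 2 ^ m * (2 * (H'.map (MonoidHom.snd G _)).index) := by ring
        _ ≤ 2 ^ m * H.index := hH' ▸ Nat.mul_le_mul_left _ hidx

theorem exists_surjective_pi_of_index_le [Finite G] {m d : ℕ} (H : Subgroup (Fin (m + d) → G))
    (hH : H.index ≤ d) : ∃ f : H →* (Fin m → G), Function.Surjective f := by
  obtain ⟨k, f, hf, hpow⟩ := exists_surjective_pi_two_pow_le_index H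
  have hmk : m < k := by
    refine (Nat.pow_lt_pow_iff_right one_lt_two).mp (Nat.lt_of_mul_lt_mul_right (a := 2 ^ d) ?_)
    calc 2 ^ m * 2 ^ d = 2 ^ (m + d) := (pow_add 2 m d).symm
      _ ≤ 2 ^ k * d := hpow.trans (Nat.mul_le_mul_left _ hH)
      _ < 2 ^ k * 2 ^ d := Nat.mul_lt_mul_of_pos_left d.lt_two_pow_self (by positivity)
  let restrict : (Fin k → G) →* (Fin m → G) :=
    MonoidHom.pi fun i ↦ Pi.evalMonoidHom _ (Fin.castLE hmk.le i)
  exact ⟨restrict.comp f, ((Fin.castLE_injective hmk.le).surjective_comp_right).comp hf⟩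

end Subgroup

theorem IntermediateField.exists_separable_isSplittingField_adjoin {F K M : Type*} [Field F]
    [Field K] [Field M] [Algebra F K] [Algebra K M] [Algebra F M] [IsScalarTower F K M]
    (E : IntermediateField F M) [FiniteDimensional F E] [IsGalois F E] :
    ∃ q : K[X], q.Separable ∧ q.IsSplittingField K (adjoin K (E : Set M)) := by
  obtain ⟨p, hsep, hsplit⟩ := IsGalois.is_separable_splitting_field F E
  have hroots : (p.map (algebraMap F K)).rootSet M = p.rootSet M := by
    simp only [rootSet, aroots_def, Polynomial.map_map, ← IsScalarTower.algebraMap_eq]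
  have hsplits : ((p.map (algebraMap F K)).map (algebraMap K M)).Splits := by
    rw [Polynomial.map_map, ← IsScalarTower.algebraMap_eq, IsScalarTower.algebraMap_eq F E M,
      ← Polynomial.map_map]
    exact hsplit.splits.map _
  refine ⟨p.map (algebraMap F K), hsep.map, ?_⟩
  rw [(isSplittingField_iff.mp hsplit).2, adjoin_adjoin_right, ← hroots]
  exact adjoin_rootSet_isSplittingField hsplits

section Restriction

variable {F E K L : Type*} [Field F] [Field E] [Field K] [Field L] [Algebra F E] [Algebra F K]
  [Algebra F L] [Algebra E L] [Algebra K L] [IsScalarTower F E L] [IsScalarTower F K L]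

theorem restrictRestrictAlgEquivMapHom_injective_of_adjoin_eq_top [Normal F E]
    (h : adjoin K (Set.range (algebraMap E L)) = ⊤) :
    Function.Injective (restrictRestrictAlgEquivMapHom F E K L) := by
  refine (injective_iff_map_eq_one _).mpr fun φ hφ ↦ ?_
  have hfix : ∀ x : E, φ (algebraMap E L x) = algebraMap E L x := fun x ↦ by
    have := AlgEquiv.restrictNormal_commutes (MulSemiringAction.toAlgAut Gal(L/K) F L φ) E x
    rw [show (MulSemiringAction.toAlgAut Gal(L/K) F L φ).restrictNormal E = 1 from hφ] at this
    exact this.symm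
  have hle : adjoin K (Set.range (algebraMap E L)) ≤ fixedField (Subgroup.zpowers φ) := by
    rw [adjoin_le_iff]
    rintro _ ⟨x, rfl⟩ ⟨ψ, hψ⟩
    exact (Subgroup.zpowers_le (H := MulAction.stabilizer Gal(L/K) (algebraMap E L x))).mpr
      (hfix x) hψ
  rwa [h, le_iff_le, fixingSubgroup_top, Subgroup.zpowers_le, Subgroup.mem_bot] at hle

theorem index_range_le_finrank_of_injective [FiniteDimensional F E] [IsGalois F E]
    [FiniteDimensional K L] [IsGalois K L] [FiniteDimensional F K] {r : Gal(L/K) →* Gal(E/F)}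
    (hr : Function.Injective r) : r.range.index ≤ finrank F K := by
  have hcard : r.range.index * finrank K L = finrank F E := by
    rw [← IsGalois.card_aut_eq_finrank, ← IsGalois.card_aut_eq_finrank,
      Nat.card_congr (MonoidHom.ofInjective hr).toEquiv, Subgroup.index_mul_card]
  have hle : finrank F E ≤ finrank F K * finrank K L := by
    have : FiniteDimensional F L := .trans F K L
    rw [finrank_mul_finrank]
    exact (IsScalarTower.toAlgHom F E L).toLinearMap.finrank_le_finrank_of_injective
      (algebraMap E L).injective
  exact Nat.le_of_mul_le_mul_right (hcard ▸ hle) finrank_pos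

end Restriction

def IsGaloisRealizable (K M G : Type*) [Field K] [Field M] [Algebra K M] [Group G] : Prop :=
  ∃ E : IntermediateField K M, FiniteDimensional K E ∧ IsGalois K E ∧ Nonempty (Gal(E/K) ≃* G)

namespace IsGaloisRealizable

theorem of_surjective {K M G Q : Type*} [Field K] [Field M] [Algebra K M] [Group G] [Group Q]
    (h : IsGaloisRealizable K M G) (f : G →* Q) (hf : Function.Surjective f) :
    IsGaloisRealizable K M Q := by
  obtain ⟨E, _, _, ⟨e⟩⟩ := h
  let φ := f.comp e.toMonoidHom
  let i := equivMap (fixedField φ.ker) E.val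
  exact ⟨_, .equiv i.toLinearEquiv, .of_algEquiv i,
    ⟨(AlgEquiv.autCongr i).symm.trans <| (IsGalois.normalAutEquivQuotient φ.ker).symm.trans <|
      QuotientGroup.quotientKerEquivOfSurjective φ (hf.comp e.surjective)⟩⟩

theorem exists_subgroup_index_le {F K M G : Type*} [Field F] [Field K] [Field M]
    [Algebra F K] [Algebra K M] [Algebra F M] [IsScalarTower F K M] [Group G]
    [FiniteDimensional F K] (h : IsGaloisRealizable F M G) :
    ∃ H : Subgroup G, H.index ≤ finrank F K ∧ IsGaloisRealizable K M H := by
  obtain ⟨E, _, _, ⟨e⟩⟩ := h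
  obtain ⟨q, hq, _⟩ := E.exists_separable_isSplittingField_adjoin (K := K)
  set E' := adjoin K (E : Set M)
  have : FiniteDimensional K E' := IsSplittingField.finiteDimensional E' q
  have : IsGalois K E' := IsGalois.of_separable_splitting_field hq
  have hEE' : E ≤ E'.restrictScalars F := subset_adjoin K (E : Set M)
  let _ : Algebra E E' := (inclusion hEE').toRingHom.toAlgebra
  have : IsScalarTower F E E' := .of_algebraMap_eq fun _ ↦ rfl
  have hr : Function.Injective (restrictRestrictAlgEquivMapHom F E K E') := by
    refine restrictRestrictAlgEquivMapHom_injective_of_adjoin_eq_top ?_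
    rw [← lift_inj, lift_adjoin, lift_top, ← Set.range_comp]
    exact congrArg (adjoin K) Subtype.range_coe
  exact ⟨_, (Subgroup.index_map_equiv _ e).trans_le (index_range_le_finrank_of_injective hr),
    E', ‹_›, ‹_›, ⟨(MonoidHom.ofInjective hr).trans (e.subgroupMap _)⟩⟩

end IsGaloisRealizable

theorem stmt_3_general (K : Type*) [Field K]
    (K' : IntermediateField K (AlgebraicClosure K)) [FiniteDimensional K ↥K']
    (G : Type*) [Group G] [Finite G]
    (hK : ∀ n : ℕ, ∃ E : IntermediateField K (AlgebraicClosure K),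
      FiniteDimensional K ↥E ∧ IsGalois K ↥E ∧
        Nonempty ((↥E ≃ₐ[K] ↥E) ≃* (Fin n → G))) :
    ∀ m : ℕ, ∃ E' : IntermediateField ↥K' (AlgebraicClosure K),
      FiniteDimensional ↥K' ↥E' ∧ IsGalois ↥K' ↥E' ∧
        Nonempty ((↥E' ≃ₐ[↥K'] ↥E') ≃* (Fin m → G)) := by
  intro m
  obtain ⟨H, hH, hrealizable⟩ :=
    IsGaloisRealizable.exists_subgroup_index_le (K := K') (hK (m + finrank K K'))
  obtain ⟨f, hf⟩ := Subgroup.exists_surjective_pi_of_index_le H hH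
  exact hrealizable.of_surjective f hf

/-- Let `K` be a perfect field with algebraic closure `K̄` and `K'/K` a finite
extension inside `K̄`. Let `G` be a finite group such that for every `n` the direct power `Gⁿ`
is realisable as a Galois group over `K`. Then for every `m`, the group `Gᵐ` is realisable as
a Galois group over `K'`. -/
theorem stmt_3 (K : Type*) [Field K] [PerfectField K]
    (K' : IntermediateField K (AlgebraicClosure K)) [FiniteDimensional K ↥K']
    (G : Type*) [Group G] [Finite G]
    (hK : ∀ n : ℕ, ∃ E : IntermediateField K (AlgebraicClosure K),
      FiniteDimensional K ↥E ∧ IsGalois K ↥E ∧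
        Nonempty ((↥E ≃ₐ[K] ↥E) ≃* (Fin n → G))) :
    ∀ m : ℕ, ∃ E' : IntermediateField ↥K' (AlgebraicClosure K),
      FiniteDimensional ↥K' ↥E' ∧ IsGalois ↥K' ↥E' ∧
        Nonempty ((↥E' ≃ₐ[↥K'] ↥E') ≃* (Fin m → G)) :=
  stmt_3_general K K' G hK
end

section
/- Let K be a perfect field and f an irreducible polynomial over K of degree n whose Galois group, acting on the n roots of f in an algebraic closure K̄, is the full symmetric group S_n. For 1 ≤ k ≤ n−2, let L_k = K(α_1,…,α_k) be the extension of K obtained by adjoining any k distinct roots α_1,…,α_k of f. Then the degree [L_k : K] equals n(n−1)⋯(n−k+1) (= ⁿP_k) and the cluster size r_K(L_k) equals k!. -/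
/-!
Since the Galois group acts on the `n` roots of `f` as the full symmetric group, a `K`-embedding
of `L = K(α₁, …, α_k)` into `K̄`, being determined by the images of the `αᵢ`, can send them to any
injective `k`-tuple of roots; so there are `n(n-1)⋯(n-k+1)` embeddings, which is `[L : K]` by
separability. If a root `x` outside `{α₁, …, α_k}` lay in `L`, the transposition of `x` with a
further root (there is one as `k ≤ n - 2`) would fix `L` but move `x`; so the `αᵢ` are the only
roots of `f` in `L`, and the `K`-endomorphisms of `L` are the `k!` permutations of them. For a
primitive element `γ` of `L`, the roots of its minimal polynomial lying in `L` correspond to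
these endomorphisms.
-/

open IntermediateField Polynomial

section RootSet

variable {K E : Type*} [Field K] [Field E] [Algebra K E]

theorem IntermediateField.mk_mem_rootSet_iff {p : K[X]} {L : IntermediateField K E} {x : E}
    (hx : x ∈ L) : (⟨x, hx⟩ : L) ∈ p.rootSet L ↔ x ∈ p.rootSet E := by
  simp only [mem_rootSet', Polynomial.map_ne_zero_iff (algebraMap K _).injective,
    ← map_eq_zero_iff L.val L.val.injective (x := aeval _ p), ← aeval_algHom_apply]
  rfl

theorem IntermediateField.ncard_rootSet (p : K[X]) (L : IntermediateField K E) :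
    (p.rootSet L).ncard = {x ∈ p.rootSet E | x ∈ L}.ncard := by
  have himage : L.val '' p.rootSet L = {x ∈ p.rootSet E | x ∈ L} := by
    ext x
    constructor
    · rintro ⟨⟨y, hy⟩, hroot, rfl⟩
      exact ⟨(mk_mem_rootSet_iff hy).mp hroot, hy⟩
    · rintro ⟨hroot, hx⟩
      exact ⟨⟨x, hx⟩, (mk_mem_rootSet_iff hx).mpr hroot, rfl⟩
  rw [← himage]
  exact (Set.ncard_image_of_injective _ (f := L.val) Subtype.val_injective).symm

theorem ncard_rootSet_minpoly_eq_natCard_algHom (M : Type*) [Field M] [Algebra K M] {γ : E}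
    (hγ : IsIntegral K γ) : ((minpoly K γ).rootSet M).ncard = Nat.card (K⟮γ⟯ →ₐ[K] M) := by
  classical
  rw [Nat.card_congr (algHomAdjoinIntegralEquiv K hγ), rootSet, Set.ncard_coe_finset,
    ← Nat.card_eq_finsetCard]
  exact Nat.card_congr (Equiv.subtypeEquivRight fun _ => Multiset.mem_toFinset)

theorem ncard_minpoly_roots_mem_eq_natCard_algHom {L : IntermediateField K E}
    [FiniteDimensional K L] {γ : E} (hγ : K⟮γ⟯ = L) :
    {x ∈ (minpoly K γ).rootSet E | x ∈ L}.ncard = Nat.card (L →ₐ[K] L) := by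
  have : FiniteDimensional K K⟮γ⟯ := hγ ▸ ‹_›
  have hint : IsIntegral K γ := (AdjoinSimple.isIntegral_gen K γ).mp (.of_finite K _)
  rw [← L.ncard_rootSet, ncard_rootSet_minpoly_eq_natCard_algHom L hint]
  exact Nat.card_congr ((equivOfEq hγ).arrowCongr AlgEquiv.refl)

end RootSet

section AdjoinRoots

variable (K : Type*) {E : Type*} [Field K] [Field E] [Algebra K E] {f : K[X]} {k : ℕ}

abbrev adjoinRoots (a : Fin k ↪ f.rootSet E) : IntermediateField K E :=
  adjoin K (Set.range fun i => (a i : E))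

variable {K} (a : Fin k ↪ f.rootSet E)

theorem mem_adjoinRoots (i : Fin k) : (a i : E) ∈ adjoinRoots K a :=
  subset_adjoin K _ (Set.mem_range_self i)

instance : FiniteDimensional K (adjoinRoots K a) :=
  finiteDimensional_adjoin fun _ ⟨i, hi⟩ =>
    hi ▸ (isAlgebraic_of_mem_rootSet (a i).2).isIntegral

theorem isSeparable_adjoinRoots (hf : f.Separable) : Algebra.IsSeparable K (adjoinRoots K a) := by
  refine (isSeparable_adjoin_iff_isSeparable K _).mpr ?_
  rintro _ ⟨i, rfl⟩
  exact hf.of_dvd (minpoly.dvd K _ (aeval_eq_zero_of_mem_rootSet (a i).2))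

theorem map_mem_adjoinRoots (σ : E ≃ₐ[K] E)
    (hσ : ∀ i, σ (a i) ∈ adjoinRoots K a) {x : E} (hx : x ∈ adjoinRoots K a) :
    σ x ∈ adjoinRoots K a := by
  have hle : (adjoinRoots K a).map (σ : E →ₐ[K] E) ≤ adjoinRoots K a := by
    rw [adjoin_map, adjoin_le_iff]
    rintro _ ⟨_, ⟨i, rfl⟩, rfl⟩
    exact hσ i
  exact hle ⟨x, hx, rfl⟩

variable {M : Type*} [Field M] [Algebra K M]

def restrictRoots (e : adjoinRoots K a →ₐ[K] M) : Fin k ↪ f.rootSet M where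
  toFun i := ⟨e ⟨a i, mem_adjoinRoots a i⟩,
    rootSet_mapsTo e ((mk_mem_rootSet_iff (mem_adjoinRoots a i)).mpr (a i).2)⟩
  inj' i j h := a.injective <| Subtype.ext <| by simpa using e.injective (congrArg Subtype.val h)

theorem restrictRoots_injective : Function.Injective (restrictRoots (M := M) a) := fun e e' h =>
  adjoin_algHom_ext K fun _ ⟨i, hi⟩ => by
    subst hi
    exact Subtype.ext_iff.mp (DFunLike.congr_fun h i)

end AdjoinRoots

theorem Nat.card_embedding_eq (α β : Type*) [Finite α] [Finite β] :
    Nat.card (α ↪ β) = (Nat.card β).descFactorial (Nat.card α) := by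
  have := Fintype.ofFinite α
  have := Fintype.ofFinite β
  simp only [Nat.card_eq_fintype_card, Fintype.card_embedding_eq]

section Galois

variable {K Ω : Type*} [Field K] [Field Ω] [Algebra K Ω] [Normal K Ω] {f : K[X]}
  [Fact ((f.map (algebraMap K Ω)).Splits)]

theorem exists_algEquiv_apply_eq_perm (hGal : Function.Surjective (Gal.galActionHom f Ω))
    (π : Equiv.Perm (f.rootSet Ω)) : ∃ σ : Ω ≃ₐ[K] Ω, ∀ x : f.rootSet Ω, σ x = π x := by
  obtain ⟨g, rfl⟩ := hGal π
  obtain ⟨σ, rfl⟩ := Gal.restrict_surjective f Ω g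
  exact ⟨σ, fun x => (Gal.galActionHom_restrict f Ω σ x).symm⟩

theorem exists_algEquiv_apply_eq_embedding (hGal : Function.Surjective (Gal.galActionHom f Ω))
    {ι : Type*} [Finite ι] (u v : ι ↪ f.rootSet Ω) : ∃ σ : Ω ≃ₐ[K] Ω, ∀ i, σ (u i) = v i := by
  obtain ⟨π, hπ⟩ := Equiv.Perm.exists_extending_pair u v u.injective v.injective
  obtain ⟨σ, hσ⟩ := exists_algEquiv_apply_eq_perm hGal π
  exact ⟨σ, fun i => by rw [hσ, hπ]⟩

variable {k : ℕ}

theorem restrictRoots_surjective (hGal : Function.Surjective (Gal.galActionHom f Ω))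
    (a : Fin k ↪ f.rootSet Ω) : Function.Surjective (restrictRoots (M := Ω) a) := fun v => by
  obtain ⟨σ, hσ⟩ := exists_algEquiv_apply_eq_embedding hGal a v
  exact ⟨(σ : Ω →ₐ[K] Ω).comp (adjoinRoots K a).val,
    Function.Embedding.ext fun i => Subtype.ext (hσ i)⟩

theorem finrank_adjoinRoots (hGal : Function.Surjective (Gal.galActionHom f Ω))
    (hf : f.Separable) (a : Fin k ↪ f.rootSet Ω) :
    Module.finrank K (adjoinRoots K a) = (Nat.card (f.rootSet Ω)).descFactorial k := by
  have := isSeparable_adjoinRoots a hf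
  rw [← AlgHom.natCard_of_splits K _ Ω fun x => minpoly_eq x ▸ Normal.splits inferInstance x.1,
    Nat.card_eq_of_bijective _ ⟨restrictRoots_injective a, restrictRoots_surjective hGal a⟩,
    Nat.card_embedding_eq, Nat.card_fin]

theorem mem_range_of_mem_adjoinRoots (hGal : Function.Surjective (Gal.galActionHom f Ω))
    (a : Fin k ↪ f.rootSet Ω) (hk : k + 2 ≤ Nat.card (f.rootSet Ω)) {x : f.rootSet Ω}
    (hx : (x : Ω) ∈ adjoinRoots K a) : x ∈ Set.range a := by
  classical
  by_contra hxa
  -- the transposition of `x` with a root `y` outside `{x} ∪ range a` fixes `K(a)` but moves `x`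
  obtain ⟨y, -, hy⟩ := Finset.exists_mem_notMem_of_card_lt_card
    (s := insert x (Finset.univ.map a)) (t := Finset.univ) <| by
      calc (insert x (Finset.univ.map a)).card ≤ k + 1 := by
            simpa using Finset.card_insert_le x (Finset.univ.map a)
        _ < Finset.univ.card := by
            rw [Finset.card_univ, ← Nat.card_eq_fintype_card]; omega
  have hyx : y ≠ x := fun h => hy (h ▸ Finset.mem_insert_self _ _)
  obtain ⟨σ, hσ⟩ := exists_algEquiv_apply_eq_perm hGal (Equiv.swap x y)
  have hfix : (σ : Ω →ₐ[K] Ω).comp (adjoinRoots K a).val = (adjoinRoots K a).val := by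
    refine restrictRoots_injective a (Function.Embedding.ext fun i => Subtype.ext ?_)
    have hix : a i ≠ x := fun h => hxa ⟨i, h⟩
    have hiy : a i ≠ y := fun h => hy (h ▸ by simp)
    exact (hσ (a i)).trans (by rw [Equiv.swap_apply_of_ne_of_ne hix hiy]; rfl)
  have hσx : σ x = x := DFunLike.congr_fun hfix ⟨x, hx⟩
  rw [hσ, Equiv.swap_apply_left] at hσx
  exact hyx (Subtype.ext hσx)

theorem natCard_rootSet_adjoinRoots (hGal : Function.Surjective (Gal.galActionHom f Ω))
    (a : Fin k ↪ f.rootSet Ω) (hk : k + 2 ≤ Nat.card (f.rootSet Ω)) :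
    Nat.card (f.rootSet (adjoinRoots K a)) = k := by
  refine (Nat.card_eq_of_bijective (restrictRoots a (AlgHom.id K _))
    ⟨(restrictRoots a _).injective, ?_⟩).symm.trans (Nat.card_fin k)
  rintro ⟨⟨x, hxL⟩, hx⟩
  obtain ⟨i, hi⟩ := mem_range_of_mem_adjoinRoots hGal a hk
    (x := ⟨x, (mk_mem_rootSet_iff hxL).mp hx⟩) hxL
  have hix : (a i : Ω) = x := congrArg Subtype.val hi
  exact ⟨i, by ext; exact hix⟩

theorem natCard_algHom_adjoinRoots_self (hGal : Function.Surjective (Gal.galActionHom f Ω))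
    (a : Fin k ↪ f.rootSet Ω) (hk : k + 2 ≤ Nat.card (f.rootSet Ω)) :
    Nat.card (adjoinRoots K a →ₐ[K] adjoinRoots K a) = k.factorial := by
  set L := adjoinRoots K a
  have hsurj : Function.Surjective (restrictRoots (M := L) a) := fun u => by
    let v : Fin k ↪ f.rootSet Ω :=
      ⟨fun i => ⟨(u i : L), (mk_mem_rootSet_iff (u i : L).2).mp (u i).2⟩,
        fun i j h => u.injective <| Subtype.ext <| Subtype.ext <| by simpa using h⟩
    obtain ⟨σ, hσ⟩ := exists_algEquiv_apply_eq_embedding hGal a v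
    have hσL : ∀ x : L, σ x ∈ L :=
      fun x => map_mem_adjoinRoots a σ (fun i => hσ i ▸ (u i : L).2) x.2
    exact ⟨((σ : Ω →ₐ[K] Ω).comp L.val).codRestrict L.toSubalgebra hσL,
      Function.Embedding.ext fun i => Subtype.ext (Subtype.ext (hσ i))⟩
  rw [Nat.card_eq_of_bijective _ ⟨restrictRoots_injective a, hsurj⟩, Nat.card_embedding_eq,
    natCard_rootSet_adjoinRoots hGal a hk, Nat.card_fin, Nat.descFactorial_self]

end Galois

/-- Let `K` be a perfect field and `f` an irreducible polynomial over `K` of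
degree `n` whose Galois group, acting on the `n` roots of `f` in an algebraic closure `K̄`,
is the full symmetric group (i.e. the action homomorphism onto the permutations of the root
set is surjective). For `1 ≤ k ≤ n - 2`, let `L_k = K(α₁, …, α_k)` be obtained by adjoining
any `k` distinct roots of `f`. Then `[L_k : K] = n(n-1)⋯(n-k+1)` and the cluster size
`r_K(L_k)` (the number of roots in `L_k` of the minimal polynomial of any primitive element
of `L_k/K`) equals `k!`. -/
theorem stmt_4 (K : Type*) [Field K] [PerfectField K]
    (f : Polynomial K) (hf : Irreducible f) (n : ℕ) (hdeg : f.natDegree = n)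
    [Fact ((f.map (algebraMap K (AlgebraicClosure K))).Splits)]
    (hGal : Function.Surjective (Polynomial.Gal.galActionHom f (AlgebraicClosure K)))
    (k : ℕ) (hk1 : 1 ≤ k) (hk2 : k ≤ n - 2)
    (α : Fin k → AlgebraicClosure K) (hinj : Function.Injective α)
    (hroots : ∀ i, α i ∈ f.rootSet (AlgebraicClosure K)) :
    Module.finrank K ↥(IntermediateField.adjoin K (Set.range α)) =
        ∏ i ∈ Finset.range k, (n - i) ∧
      ∀ γ : AlgebraicClosure K,
        IntermediateField.adjoin K {γ} = IntermediateField.adjoin K (Set.range α) →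
          {x ∈ (minpoly K γ).rootSet (AlgebraicClosure K) |
            x ∈ IntermediateField.adjoin K (Set.range α)}.ncard = Nat.factorial k := by
  have hsep : f.Separable := PerfectField.separable_of_irreducible hf
  let a : Fin k ↪ f.rootSet (AlgebraicClosure K) :=
    ⟨fun i => ⟨α i, hroots i⟩, fun i j h => hinj (congrArg Subtype.val h)⟩
  have hL : adjoin K (Set.range α) = adjoinRoots K a := rfl
  have hcard : Nat.card (f.rootSet (AlgebraicClosure K)) = n := by
    rw [Nat.card_eq_fintype_card, card_rootSet_eq_natDegree hsep Fact.out, hdeg]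
  rw [hL]
  refine ⟨?_, fun γ hγ => ?_⟩
  · rw [finrank_adjoinRoots hGal hsep, hcard, Nat.descFactorial_eq_prod_range]
  · rw [ncard_minpoly_roots_mem_eq_natCard_algHom hγ,
      natCard_algHom_adjoinRoots_self hGal a (by omega)]
end

section
/- Let K be a perfect field and M/K a finite extension inside an algebraic closure K̄, with Galois closure M̃, G' = Gal(M̃/K) and H' = Gal(M̃/M). Then M/K is obtained by nontrivial strong cluster magnification from some subextension L/K (K ⊆ L ⊆ M) if and only if there is an isomorphism G' ≅ A × B for some nontrivial groups A and B under which H' corresponds to A' × {1} for some subgroup A' ≤ A with index [A : A'] > 2. -/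
/-- The Galois closure inside the algebraic closure of a finite extension `M/K`. -/
noncomputable def galoisClosure (K : Type*) [Field K]
    (M : IntermediateField K (AlgebraicClosure K)) : IntermediateField K (AlgebraicClosure K) :=
  IntermediateField.normalClosure K ↥M (AlgebraicClosure K)

/-- `M/K` is obtained by strong cluster magnification from the subextension `L/K` through the
finite Galois extension `F/K`: `[L:K] > 2`, the Galois closure `L̃` of `L` and `F` are
linearly disjoint over `K` (equivalently `L̃ ∩ F = K`, since `F/K` is Galois), and `LF = M`. -/
def IsStrongClusterMagnification (K : Type*) [Field K]
    (L F M : IntermediateField K (AlgebraicClosure K)) : Prop :=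
  2 < Module.finrank K ↥L ∧ FiniteDimensional K ↥F ∧ IsGalois K ↥F ∧
    galoisClosure K L ⊓ F = ⊥ ∧ L ⊔ F = M


/-! Inside the Galois closure `E = M̃`, with `G = Gal(E/K)` and `H = Gal(E/M)`, a magnification
`M = LF` corresponds to subgroups `P = Gal(E/L)` and `N = Gal(E/F)` with `N` normal, `P ⊓ N = H`,
`P.normalCore ⊔ N = ⊤` (the core of `P` is `Gal(E/L̃)`) and `N ≠ ⊤`, `[G : P] = [L : K] > 2`.
Since `E` is the normal closure of `M`, `H` has trivial core, so the normal subgroups `N` and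
`P.normalCore` meet trivially and `G` is their internal direct product, with `H ≤ N` sitting as
`(P ⊓ N) × 1`. Conversely a decomposition `G ≅ A × B` with `H ↦ A' × 1` gives
`P = φ⁻¹(A' × B)` and `N = φ⁻¹(A × 1)`. -/

open IntermediateField

namespace Subgroup

variable {G : Type*} [Group G]

section InternalProduct

variable {N C : Subgroup G} [hN : N.Normal] [hC : C.Normal]

noncomputable def mulEquivProdOfIsCompl (h : IsCompl N C) : G ≃* N × C :=
  (MulEquiv.ofBijective
    (N.subtype.noncommCoprod C.subtype fun a b =>
      commute_of_normal_of_disjoint N C hN hC h.disjoint a b a.2 b.2)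
    (isComplement'_of_disjoint_and_mul_eq_univ h.disjoint <| by
      rw [← normal_mul, h.codisjoint.eq_top, coe_top])).symm

theorem mulEquivProdOfIsCompl_symm_apply (h : IsCompl N C) (x : N × C) :
    (mulEquivProdOfIsCompl h).symm x = x.1 * x.2 := rfl

theorem map_mulEquivProdOfIsCompl_inf (h : IsCompl N C) (X : Subgroup G) :
    (X ⊓ N).map (mulEquivProdOfIsCompl h).toMonoidHom = (X.subgroupOf N).prod ⊥ := by
  ext ⟨a, b⟩
  have hb : (a * b : G) ∈ N ↔ b = 1 := by
    rw [mul_mem_cancel_left a.2]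
    exact ⟨fun hbN => Subtype.ext (disjoint_def.mp h.disjoint hbN b.2), fun hb => hb ▸ N.one_mem⟩
  rw [mem_map_equiv, mulEquivProdOfIsCompl_symm_apply, mem_inf, hb, mem_prod, mem_bot,
    mem_subgroupOf]
  constructor
  · rintro ⟨hX, rfl⟩
    simpa using hX
  · rintro ⟨hX, rfl⟩
    simpa using hX

theorem map_mulEquivProdOfIsCompl_of_le (h : IsCompl N C) {X : Subgroup G} (hX : C ≤ X) :
    X.map (mulEquivProdOfIsCompl h).toMonoidHom = (X.subgroupOf N).prod ⊤ := by
  ext ⟨a, b⟩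
  rw [mem_map_equiv, mulEquivProdOfIsCompl_symm_apply, mul_mem_cancel_right (hX b.2)]
  simp [mem_prod, mem_subgroupOf]

end InternalProduct

theorem exists_mulEquiv_prod_map_eq_prod_bot {H P N : Subgroup G} [N.Normal]
    (hH : H.normalCore = ⊥) (hPN : P ⊓ N = H) (hPN_top : P.normalCore ⊔ N = ⊤)
    (hN : N ≠ ⊤) (hP : P ≠ ⊤) :
    ∃ (A B : Subgroup G) (φ : G ≃* A × B) (A' : Subgroup A), Nontrivial A ∧ Nontrivial B ∧
      H.map φ.toMonoidHom = A'.prod ⊥ ∧ A'.index = P.index := by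
  have hdisj : Disjoint N P.normalCore := by
    rw [disjoint_iff, eq_bot_iff, ← hH, normal_le_normalCore, ← hPN]
    exact le_inf (inf_le_right.trans P.normalCore_le) inf_le_left
  have hcompl : IsCompl N P.normalCore := ⟨hdisj, codisjoint_iff.mpr (by rwa [sup_comm])⟩
  refine ⟨N, P.normalCore, mulEquivProdOfIsCompl hcompl, P.subgroupOf N, ?_, ?_, ?_, ?_⟩
  · rw [nontrivial_iff_ne_bot]
    rintro rfl
    rw [sup_bot_eq] at hPN_top
    exact hP (eq_top_iff.mpr (hPN_top ▸ P.normalCore_le))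
  · rw [nontrivial_iff_ne_bot]
    rintro hbot
    rw [hbot, bot_sup_eq] at hPN_top
    exact hN hPN_top
  · rw [← hPN, map_mulEquivProdOfIsCompl_inf]
  · rw [← index_map_equiv P (mulEquivProdOfIsCompl hcompl), ← MulEquiv.toMonoidHom_eq_coe,
      map_mulEquivProdOfIsCompl_of_le hcompl P.normalCore_le, index_prod, index_top, mul_one]

theorem exists_normalCore_sup_eq_top_of_map_eq_prod_bot {A B : Type*} [Group A] [Group B]
    [Nontrivial B] {H : Subgroup G} (φ : G ≃* A × B) {A' : Subgroup A}
    (hH : H.map φ.toMonoidHom = A'.prod ⊥) :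
    ∃ P N : Subgroup G, N.Normal ∧ P ⊓ N = H ∧ P.normalCore ⊔ N = ⊤ ∧ N ≠ ⊤ ∧
      P.index = A'.index := by
  set P := (A'.prod ⊤).comap φ.toMonoidHom
  set N := ((⊤ : Subgroup A).prod ⊥).comap φ.toMonoidHom
  set C := ((⊥ : Subgroup A).prod ⊤).comap φ.toMonoidHom
  have hCP : C ≤ P.normalCore := by
    rw [normal_le_normalCore]
    exact comap_mono (prod_mono bot_le le_rfl)
  refine ⟨P, N, inferInstance, ?_, ?_, ?_, ?_⟩
  · rw [← comap_map_eq_self_of_injective (f := φ.toMonoidHom) φ.injective H, hH]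
    ext g
    simp [P, N, mem_prod]
  · refine eq_top_iff.mpr fun g _ => ?_
    have hg : g = φ.symm (1, (φ g).2) * φ.symm ((φ g).1, 1) := by
      rw [← map_mul, Prod.mk_mul_mk, one_mul, mul_one, Prod.mk.eta, MulEquiv.symm_apply_apply]
    rw [hg]
    refine mul_mem_sup (hCP ?_) ?_ <;> simp [C, N, mem_prod]
  · obtain ⟨b, hb⟩ := exists_ne (1 : B)
    intro hN
    have : φ.symm (1, b) ∈ N := hN ▸ mem_top _
    simp [N, mem_prod, hb] at this
  · rw [index_comap_of_surjective _ φ.surjective, index_prod, index_top, mul_one]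

end Subgroup

namespace IntermediateField

section Galois

variable {F E : Type*} [Field F] [Field E] [Algebra F E] [FiniteDimensional F E] [IsGalois F E]

theorem fixingSubgroup_inf (X Y : IntermediateField F E) :
    (X ⊓ Y).fixingSubgroup = X.fixingSubgroup ⊔ Y.fixingSubgroup :=
  IsGalois.intermediateFieldEquivSubgroup.map_inf X Y

theorem fixedField_inf (H₁ H₂ : Subgroup (E ≃ₐ[F] E)) :
    fixedField (H₁ ⊓ H₂) = fixedField H₁ ⊔ fixedField H₂ :=
  IsGalois.intermediateFieldEquivSubgroup.symm.map_sup (.toDual H₁) (.toDual H₂)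

theorem fixedField_sup (H₁ H₂ : Subgroup (E ≃ₐ[F] E)) :
    fixedField (H₁ ⊔ H₂) = fixedField H₁ ⊓ fixedField H₂ :=
  IsGalois.intermediateFieldEquivSubgroup.symm.map_inf (.toDual H₁) (.toDual H₂)

end Galois

section Lift

variable {K Ω : Type*} [Field K] [Field Ω] [Algebra K Ω] {E : IntermediateField K Ω}

theorem lift_comap_val {X : IntermediateField K Ω} (h : X ≤ E) : lift (comap E.val X) = X :=
  map_comap_eq_self (by rwa [fieldRange_val])

theorem finrank_lift (X : IntermediateField K E) : Module.finrank K (lift X) = Module.finrank K X :=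
  (liftAlgEquiv X).toLinearEquiv.finrank_eq.symm

theorem isGalois_comap_val [IsGalois K E] {X : IntermediateField K Ω} [Normal K X] (h : X ≤ E) :
    IsGalois K (comap E.val X) :=
  have : Normal K (lift (comap E.val X)) := by rwa [lift_comap_val h]
  { to_isSeparable := Algebra.isSeparable_tower_bot_of_isSeparable K _ E
    to_normal := Normal.of_algEquiv (liftAlgEquiv _).symm }

theorem normalCore_fixingSubgroup_comap_val_normalClosure [Normal K Ω] (M : IntermediateField K Ω)
    [FiniteDimensional K (normalClosure K M Ω)] [IsGalois K (normalClosure K M Ω)] :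
    (comap (normalClosure K M Ω).val M).fixingSubgroup.normalCore = ⊥ := by
  set E := normalClosure K M Ω
  set H := (comap E.val M).fixingSubgroup
  set X := fixedField H.normalCore
  have hMX : comap E.val M ≤ X := (le_iff_le _ _).mpr H.normalCore_le
  have : Normal K (lift X) := Normal.of_algEquiv (liftAlgEquiv X)
  have hEX : E ≤ lift X := normalClosure_le_iff_of_normal.mpr <|
    lift_comap_val (le_normalClosure M) ▸ map_mono _ hMX
  have hX : X = ⊤ := lift_injective E (by rw [lift_top]; exact le_antisymm (lift_le X) hEX)
  rw [← fixingSubgroup_fixedField H.normalCore, ← fixingSubgroup_top, ← hX]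

end Lift

end IntermediateField

section Magnification

variable {K : Type*} [Field K] {E M : IntermediateField K (AlgebraicClosure K)}
  [FiniteDimensional K E] [IsGalois K E]

theorem exists_subgroups_of_isStrongClusterMagnification (hME : M ≤ E)
    {L F : IntermediateField K (AlgebraicClosure K)} (hLM : L ≤ M)
    (h : IsStrongClusterMagnification K L F M) (hF : F ≠ ⊥) :
    ∃ P N : Subgroup (E ≃ₐ[K] E), N.Normal ∧ P ⊓ N = (comap E.val M).fixingSubgroup ∧
      P.normalCore ⊔ N = ⊤ ∧ N ≠ ⊤ ∧ 2 < P.index := by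
  obtain ⟨hL, -, hFgal, hdisj, hsup⟩ := h
  have hLE : L ≤ E := hLM.trans hME
  have hFE : F ≤ E := (hsup ▸ le_sup_right : F ≤ M).trans hME
  have hTE : galoisClosure K L ≤ E := normalClosure_le_iff_of_normal.mpr hLE
  have : IsGalois K (comap E.val F) := isGalois_comap_val hFE
  have : Normal K (galoisClosure K L) := normalClosure.normal K L _
  have : IsGalois K (comap E.val (galoisClosure K L)) := isGalois_comap_val hTE
  refine ⟨(comap E.val L).fixingSubgroup, (comap E.val F).fixingSubgroup, inferInstance,
    ?_, ?_, ?_, ?_⟩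
  · rw [← fixingSubgroup_sup]
    congr 1
    apply lift_injective E
    rw [lift_sup, lift_comap_val hLE, lift_comap_val hFE, lift_comap_val hME, hsup]
  · have hTF : comap E.val (galoisClosure K L) ⊓ comap E.val F = ⊥ := by
      apply lift_injective E
      rw [lift_inf, lift_comap_val hTE, lift_comap_val hFE, hdisj, lift_bot]
    have hLT : comap E.val L ≤ comap E.val (galoisClosure K L) :=
      fun _ hx => le_normalClosure L hx
    refine eq_top_iff.mpr ?_
    calc ⊤ = (comap E.val (galoisClosure K L) ⊓ comap E.val F).fixingSubgroup := by
          rw [hTF, fixingSubgroup_bot]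
      _ = (comap E.val (galoisClosure K L)).fixingSubgroup ⊔ (comap E.val F).fixingSubgroup :=
          fixingSubgroup_inf _ _
      _ ≤ _ := sup_le_sup_right
          (Subgroup.normal_le_normalCore.mpr (fixingSubgroup_antitone hLT)) _
  · intro hN
    have hFc : comap E.val F = ⊥ := by
      rw [← IsGalois.fixedField_fixingSubgroup (comap E.val F), hN, IsGalois.fixedField_top]
    exact hF (by rw [← lift_comap_val hFE, hFc, lift_bot])
  · rwa [← finrank_eq_fixingSubgroup_index, ← finrank_lift, lift_comap_val hLE]

theorem exists_isStrongClusterMagnification_of_subgroups (hME : M ≤ E)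
    {P N : Subgroup (E ≃ₐ[K] E)} [N.Normal] (hPN : P ⊓ N = (comap E.val M).fixingSubgroup)
    (hPN_top : P.normalCore ⊔ N = ⊤) (hN : N ≠ ⊤) (hP : 2 < P.index) :
    ∃ L F : IntermediateField K (AlgebraicClosure K),
      L ≤ M ∧ IsStrongClusterMagnification K L F M ∧ F ≠ ⊥ := by
  have hM : fixedField (P ⊓ N) = comap E.val M := by
    rw [hPN, IsGalois.fixedField_fixingSubgroup]
  have hLT : lift (fixedField P) ≤ lift (fixedField P.normalCore) :=
    map_mono _ (fixedField_antitone P.normalCore_le)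
  have : Normal K (lift (fixedField P.normalCore)) := Normal.of_algEquiv (liftAlgEquiv _)
  refine ⟨lift (fixedField P), lift (fixedField N), ?_, ⟨?_, ?_, ?_, ?_, ?_⟩, ?_⟩
  · rw [← lift_comap_val hME, ← hM]
    exact map_mono _ (fixedField_antitone inf_le_left)
  · rwa [finrank_lift, finrank_eq_fixingSubgroup_index, fixingSubgroup_fixedField]
  · exact Module.Finite.equiv (liftAlgEquiv _).toLinearEquiv
  · exact IsGalois.of_algEquiv (liftAlgEquiv _)
  · refine le_bot_iff.mp ?_
    calc galoisClosure K (lift (fixedField P)) ⊓ lift (fixedField N)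
        ≤ lift (fixedField P.normalCore) ⊓ lift (fixedField N) :=
          inf_le_inf_right _ (normalClosure_le_iff_of_normal.mpr hLT)
      _ = ⊥ := by rw [← lift_inf, ← fixedField_sup, hPN_top, IsGalois.fixedField_top, lift_bot]
  · rw [← lift_sup, ← fixedField_inf, hM, lift_comap_val hME]
  · intro hF
    apply hN
    rw [← fixingSubgroup_fixedField N, ← fixingSubgroup_bot]
    exact congrArg fixingSubgroup (lift_injective E (by rw [hF, lift_bot]))

end Magnification

/-- Let `M/K` be a finite extension of a perfect field `K`, with Galois closure
`M̃`, `G' = Gal(M̃/K)` and `H' = Gal(M̃/M)`. Then `M/K` is obtained by nontrivial strong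
cluster magnification from some subextension `L/K` iff `G' ≅ A × B` for nontrivial subgroups
`A`, `B`, under which `H'` corresponds to `A' × 1` for some subgroup `A' ≤ A` with
`[A : A'] > 2`. -/
theorem stmt_6 (K : Type*) [Field K] [PerfectField K]
    (M : IntermediateField K (AlgebraicClosure K)) [FiniteDimensional K ↥M] :
    (∃ L F : IntermediateField K (AlgebraicClosure K),
        L ≤ M ∧ IsStrongClusterMagnification K L F M ∧ F ≠ ⊥) ↔
      (∃ (A B : Subgroup (↥(galoisClosure K M) ≃ₐ[K] ↥(galoisClosure K M)))
          (φ : (↥(galoisClosure K M) ≃ₐ[K] ↥(galoisClosure K M)) ≃* ↥A × ↥B)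
          (A' : Subgroup ↥A),
        Nontrivial ↥A ∧ Nontrivial ↥B ∧
          Subgroup.map φ.toMonoidHom
              (IntermediateField.fixingSubgroup
                (IntermediateField.comap (galoisClosure K M).val M)) =
            A'.prod ⊥ ∧
          2 < A'.index) := by
  have : IsGalois K (galoisClosure K M) := IsGalois.normalClosure K M _
  have : FiniteDimensional K (galoisClosure K M) := normalClosure.is_finiteDimensional K M _
  have hME : M ≤ galoisClosure K M := le_normalClosure M
  constructor
  · rintro ⟨L, F, hLM, h, hF⟩
    obtain ⟨P, N, hN, hPN, hPN_top, hN_top, hP⟩ :=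
      exists_subgroups_of_isStrongClusterMagnification hME hLM h hF
    have hH : (comap (galoisClosure K M).val M).fixingSubgroup.normalCore = ⊥ :=
      normalCore_fixingSubgroup_comap_val_normalClosure M
    obtain ⟨A, B, φ, A', hA, hB, hφ, hA'⟩ :=
      Subgroup.exists_mulEquiv_prod_map_eq_prod_bot hH hPN hPN_top hN_top
        (fun hP_top => by rw [hP_top, Subgroup.index_top] at hP; omega)
    exact ⟨A, B, φ, A', hA, hB, hφ, hA' ▸ hP⟩
  · rintro ⟨A, B, φ, A', -, hB, hφ, hA'⟩
    obtain ⟨P, N, hN, hPN, hPN_top, hN_top, hP⟩ :=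
      Subgroup.exists_normalCore_sup_eq_top_of_map_eq_prod_bot φ hφ
    exact exists_isStrongClusterMagnification_of_subgroups hME hPN hPN_top hN_top (hP ▸ hA')
end

section
/- Let K be a perfect field and M/K a finite Galois extension inside an algebraic closure K̄. Then M/K is obtained by nontrivial strong cluster magnification from some subextension L/K if and only if Gal(M/K) is isomorphic to a direct product A × B of nontrivial groups A and B with |A| > 2. Moreover, when this happens, the subextension L/K is itself Galois over K. -/
open IntermediateField Module

namespace Subgroup

open scoped Pointwise

variable {G : Type*} [Group G]

theorem eq_of_le_of_inf_eq_bot_of_sup_eq_top {H H' N : Subgroup G} [H'.Normal] (hle : H' ≤ H)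
    (hinf : H ⊓ N = ⊥) (hsup : H' ⊔ N = ⊤) : H' = H := by
  refine le_antisymm hle fun h hh => ?_
  obtain ⟨x, hx, n, hn, rfl⟩ : h ∈ (H' : Set G) * (N : Set G) := by
    rw [← normal_mul H' N, hsup]
    exact mem_top h
  have hn1 : n ∈ H ⊓ N := ⟨by simpa using H.mul_mem (H.inv_mem (hle hx)) hh, hn⟩
  rw [hinf, mem_bot] at hn1
  simpa [hn1] using hx

theorem isComplement'_of_inf_eq_bot_of_sup_eq_top {H N : Subgroup G} [N.Normal]
    (hinf : H ⊓ N = ⊥) (hsup : H ⊔ N = ⊤) : IsComplement' H N :=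
  isComplement'_of_disjoint_and_mul_eq_univ (disjoint_iff.mpr hinf)
    (by rw [← mul_normal, hsup, coe_top])

noncomputable def IsComplement'.mulEquivProd {H N : Subgroup G} [hH : H.Normal] [hN : N.Normal]
    (h : IsComplement' H N) : G ≃* H × N :=
  (MulEquiv.ofBijective (H.subtype.noncommCoprod N.subtype fun a b =>
    commute_of_normal_of_disjoint H N hH hN h.disjoint a b a.2 b.2) h).symm

theorem exists_normal_complements_iff_exists_mulEquiv_prod [Finite G] :
    (∃ H N : Subgroup G, H.Normal ∧ N.Normal ∧ H ⊔ N = ⊤ ∧ H ⊓ N = ⊥ ∧ 2 < H.index ∧ N ≠ ⊤) ↔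
      ∃ A B : Subgroup G, Nontrivial A ∧ Nontrivial B ∧ 2 < Nat.card A ∧
        Nonempty (G ≃* A × B) := by
  constructor
  · rintro ⟨H, N, hH, hN, hsup, hinf, hindex, hNtop⟩
    have hc : IsComplement' N H :=
      isComplement'_of_inf_eq_bot_of_sup_eq_top (by rwa [inf_comm]) (by rwa [sup_comm])
    have hcard : Nat.card N = H.index := hc.index_eq_card.symm
    refine ⟨N, H, ?_, ?_, hcard ▸ hindex, ⟨hc.mulEquivProd⟩⟩
    · rw [← Finite.one_lt_card_iff_nontrivial]
      omega
    · rw [nontrivial_iff_ne_bot]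
      rintro rfl
      exact hNtop (by simpa using hsup)
  · rintro ⟨A, B, -, hB, hA, ⟨e⟩⟩
    have mem_ker_fst (g : G) : g ∈ ((MonoidHom.fst A B).comp e.toMonoidHom).ker ↔ (e g).1 = 1 :=
      Iff.rfl
    have mem_ker_snd (g : G) : g ∈ ((MonoidHom.snd A B).comp e.toMonoidHom).ker ↔ (e g).2 = 1 :=
      Iff.rfl
    refine ⟨((MonoidHom.fst A B).comp e.toMonoidHom).ker,
      ((MonoidHom.snd A B).comp e.toMonoidHom).ker, inferInstance, inferInstance, ?_, ?_, ?_, ?_⟩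
    · refine eq_top_iff.mpr fun g _ => ?_
      rw [show g = e.symm (1, (e g).2) * e.symm ((e g).1, 1) by simp [← map_mul]]
      exact mul_mem_sup ((mem_ker_fst _).2 (by simp)) ((mem_ker_snd _).2 (by simp))
    · ext g
      simp only [mem_inf, mem_ker_fst, mem_ker_snd, mem_bot]
      refine ⟨fun h => e.injective (Prod.ext (by simpa using h.1) (by simpa using h.2)), ?_⟩
      rintro rfl
      simp
    · rwa [index_ker, MonoidHom.range_eq_top.mpr, card_top]
      exact fun a => ⟨e.symm (a, 1), by simp⟩
    · obtain ⟨b, hb⟩ := exists_ne (1 : B)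
      intro htop
      have : e.symm (1, b) ∈ ((MonoidHom.snd A B).comp e.toMonoidHom).ker := htop ▸ mem_top _
      exact hb (by simpa using (mem_ker_snd _).1 this)

end Subgroup

namespace IntermediateField

variable {K E : Type*} [Field K] [Field E] [Algebra K E] [FiniteDimensional K E] [IsGalois K E]

theorem fixingSubgroup_inf_s7 (L F : IntermediateField K E) :
    (L ⊓ F).fixingSubgroup = L.fixingSubgroup ⊔ F.fixingSubgroup :=
  IsGalois.intermediateFieldEquivSubgroup.map_inf L F

theorem fixingSubgroup_injective :
    Function.Injective (fixingSubgroup : IntermediateField K E → Subgroup Gal(E/K)) :=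
  IsGalois.intermediateFieldEquivSubgroup.injective

theorem eq_of_le_of_inf_eq_bot_of_sup_eq_top {L T F : IntermediateField K E} [Normal K T]
    (hLT : L ≤ T) (hTF : T ⊓ F = ⊥) (hLF : L ⊔ F = ⊤) : L = T := by
  have : T.fixingSubgroup.Normal := T.restrictNormalHom_ker ▸ MonoidHom.normal_ker _
  refine fixingSubgroup_injective (Subgroup.eq_of_le_of_inf_eq_bot_of_sup_eq_top
    (N := F.fixingSubgroup) (fixingSubgroup_antitone hLT) ?_ ?_).symm
  · rw [← fixingSubgroup_sup, hLF, fixingSubgroup_top]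
  · rw [← fixingSubgroup_inf_s7, hTF, fixingSubgroup_bot]

theorem exists_isGalois_complements_iff :
    (∃ L F : IntermediateField K E, IsGalois K L ∧ IsGalois K F ∧ L ⊓ F = ⊥ ∧ L ⊔ F = ⊤ ∧
        2 < finrank K L ∧ F ≠ ⊥) ↔
      ∃ H N : Subgroup Gal(E/K), H.Normal ∧ N.Normal ∧ H ⊔ N = ⊤ ∧ H ⊓ N = ⊥ ∧
        2 < H.index ∧ N ≠ ⊤ := by
  have key (L F : IntermediateField K E) :
      (IsGalois K L ∧ IsGalois K F ∧ L ⊓ F = ⊥ ∧ L ⊔ F = ⊤ ∧ 2 < finrank K L ∧ F ≠ ⊥) ↔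
        (L.fixingSubgroup.Normal ∧ F.fixingSubgroup.Normal ∧
          L.fixingSubgroup ⊔ F.fixingSubgroup = ⊤ ∧ L.fixingSubgroup ⊓ F.fixingSubgroup = ⊥ ∧
          2 < L.fixingSubgroup.index ∧ F.fixingSubgroup ≠ ⊤) := by
    rw [InfiniteGalois.normal_iff_isGalois, InfiniteGalois.normal_iff_isGalois,
      ← fixingSubgroup_inf_s7, ← fixingSubgroup_sup, ← fixingSubgroup_top, ← fixingSubgroup_bot,
      fixingSubgroup_injective.eq_iff, fixingSubgroup_injective.eq_iff,
      fixingSubgroup_injective.ne_iff, finrank_eq_fixingSubgroup_index]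
  constructor
  · rintro ⟨L, F, h⟩
    exact ⟨_, _, (key L F).mp h⟩
  · rintro ⟨H, N, h⟩
    refine ⟨fixedField H, fixedField N, (key _ _).mpr ?_⟩
    rwa [fixingSubgroup_fixedField, fixingSubgroup_fixedField]

end IntermediateField

section Magnification

variable {K : Type*} [Field K] {M : IntermediateField K (AlgebraicClosure K)}
  [FiniteDimensional K M]

theorem IsStrongClusterMagnification.isGalois [IsGalois K M]
    {L F : IntermediateField K (AlgebraicClosure K)} (hLM : L ≤ M)
    (h : IsStrongClusterMagnification K L F M) : IsGalois K L := by
  obtain ⟨-, -, -, hdisj, hsup⟩ := h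
  have hTM : galoisClosure K L ≤ M := normalClosure_le_iff_of_normal.mpr hLM
  have hFM : F ≤ M := hsup ▸ le_sup_right
  have hTnormal : Normal K (galoisClosure K L) := normalClosure.normal K L _
  have : Normal K (restrict hTM) := Normal.of_algEquiv (restrictAlgEquiv hTM)
  have hLT : restrict hLM = restrict hTM := by
    refine eq_of_le_of_inf_eq_bot_of_sup_eq_top (F := restrict hFM) ?_ ?_ ?_
    · exact fun x hx => (mem_restrict hTM x).2 (le_normalClosure L ((mem_restrict hLM x).1 hx))
    · rw [← lift_inj, lift_inf, lift_restrict, lift_restrict, hdisj, lift_bot]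
    · rw [← lift_inj, lift_sup, lift_restrict, lift_restrict, hsup, lift_top]
  have hL : galoisClosure K L = L := by simpa using congrArg lift hLT.symm
  rw [hL] at hTnormal
  have : Algebra.IsSeparable K L := Algebra.IsSeparable.of_algHom K M (inclusion hLM)
  exact isGalois_iff.mpr ⟨‹_›, hTnormal⟩

theorem isStrongClusterMagnification_lift_iff (L F : IntermediateField K M) [IsGalois K L] :
    IsStrongClusterMagnification K (lift L) (lift F) M ↔
      2 < finrank K L ∧ IsGalois K F ∧ L ⊓ F = ⊥ ∧ L ⊔ F = ⊤ := by
  have : Normal K (lift L) := Normal.of_algEquiv (liftAlgEquiv L)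
  have hL : galoisClosure K (lift L) = lift L := normalClosure_of_normal _
  have : FiniteDimensional K (lift F) := (liftAlgEquiv F).toLinearEquiv.finiteDimensional
  rw [IsStrongClusterMagnification, hL, ← (liftAlgEquiv L).toLinearEquiv.finrank_eq,
    ← (liftAlgEquiv F).transfer_galois, ← lift_inf, ← lift_sup,
    (lift_injective M).eq_iff' (lift_bot K M), (lift_injective M).eq_iff' (lift_top K M)]
  simp only [true_and, this]

theorem exists_magnification_iff [IsGalois K M] :
    (∃ L F : IntermediateField K (AlgebraicClosure K),
        L ≤ M ∧ IsStrongClusterMagnification K L F M ∧ F ≠ ⊥) ↔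
      ∃ L F : IntermediateField K M, IsGalois K L ∧ IsGalois K F ∧ L ⊓ F = ⊥ ∧ L ⊔ F = ⊤ ∧
        2 < finrank K L ∧ F ≠ ⊥ := by
  constructor
  · rintro ⟨L, F, hLM, h, hF⟩
    have hL : IsGalois K L := h.isGalois hLM
    have hFM : F ≤ M := h.2.2.2.2 ▸ le_sup_right
    obtain ⟨L, rfl⟩ : ∃ L₀, lift L₀ = L := ⟨_, lift_restrict hLM⟩
    obtain ⟨F, rfl⟩ : ∃ F₀, lift F₀ = F := ⟨_, lift_restrict hFM⟩
    have : IsGalois K L := (liftAlgEquiv L).transfer_galois.mpr hL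
    obtain ⟨h2, hFgal, hinf, hsup⟩ := (isStrongClusterMagnification_lift_iff L F).mp h
    exact ⟨L, F, this, hFgal, hinf, hsup, h2, fun hbot => hF (by rw [hbot, lift_bot])⟩
  · rintro ⟨L, F, hL, hF, hinf, hsup, h2, hFbot⟩
    refine ⟨lift L, lift F, lift_le L,
      (isStrongClusterMagnification_lift_iff L F).mpr ⟨h2, hF, hinf, hsup⟩, ?_⟩
    rwa [Ne, ← lift_bot, lift_inj]

end Magnification

theorem stmt_7_general (K : Type*) [Field K]
    (M : IntermediateField K (AlgebraicClosure K)) [FiniteDimensional K ↥M] [IsGalois K ↥M] :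
    ((∃ L F : IntermediateField K (AlgebraicClosure K),
        L ≤ M ∧ IsStrongClusterMagnification K L F M ∧ F ≠ ⊥) ↔
      (∃ A B : Subgroup (↥M ≃ₐ[K] ↥M),
        Nontrivial ↥A ∧ Nontrivial ↥B ∧ 2 < Nat.card ↥A ∧
          Nonempty ((↥M ≃ₐ[K] ↥M) ≃* ↥A × ↥B))) ∧
    (∀ L F : IntermediateField K (AlgebraicClosure K),
        L ≤ M → IsStrongClusterMagnification K L F M → F ≠ ⊥ → IsGalois K ↥L) := by
  refine ⟨?_, fun L F hLM h _ => h.isGalois hLM⟩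
  rw [exists_magnification_iff, exists_isGalois_complements_iff,
    Subgroup.exists_normal_complements_iff_exists_mulEquiv_prod]

/-- Let `M/K` be a finite Galois extension of a perfect field `K`. Then `M/K` is
obtained by nontrivial strong cluster magnification from some subextension `L/K` iff
`Gal(M/K) ≅ A × B` for nontrivial subgroups `A` and `B` with `|A| > 2`. Moreover, when this
happens, `L/K` is itself Galois. -/
theorem stmt_7 (K : Type*) [Field K] [PerfectField K]
    (M : IntermediateField K (AlgebraicClosure K)) [FiniteDimensional K ↥M] [IsGalois K ↥M] :
    ((∃ L F : IntermediateField K (AlgebraicClosure K),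
        L ≤ M ∧ IsStrongClusterMagnification K L F M ∧ F ≠ ⊥) ↔
      (∃ A B : Subgroup (↥M ≃ₐ[K] ↥M),
        Nontrivial ↥A ∧ Nontrivial ↥B ∧ 2 < Nat.card ↥A ∧
          Nonempty ((↥M ≃ₐ[K] ↥M) ≃* ↥A × ↥B))) ∧
    (∀ L F : IntermediateField K (AlgebraicClosure K),
        L ≤ M → IsStrongClusterMagnification K L F M → F ≠ ⊥ → IsGalois K ↥L) :=
  stmt_7_general K M
end

section
/- Let K be a perfect field with algebraic closure K̄ and let α, β ∈ K̄ be such that K(α) = K(β). Then for every extension M of K contained in K̄, the number of roots of the minimal polynomial of α over K that lie in M equals the number of roots of the minimal polynomial of β over K that lie in M. -/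
/-!
A `K`-embedding of `K⟮α⟯` into `M` is determined by the image of `α`, which can be any root of
the minimal polynomial of `α` in `M`. So the root capacity `ρ_K(M, α)` counts the `K`-embeddings
`K⟮α⟯ →ₐ[K] M`, a number that depends only on the field `K⟮α⟯`.
-/

noncomputable def rootCapacity (K : Type*) [Field K]
    (M : IntermediateField K (AlgebraicClosure K)) (α : AlgebraicClosure K) : ℕ :=
  {x ∈ (minpoly K α).rootSet (AlgebraicClosure K) | x ∈ M}.ncard

open Polynomial

namespace IntermediateField

variable {K L : Type*} [Field K] [Field L] [Algebra K L]

theorem rootSet_sep_mem_eq_image (p : K[X]) (M : IntermediateField K L) :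
    {x ∈ p.rootSet L | x ∈ M} = (↑) '' p.rootSet M := by
  ext x
  constructor
  · rintro ⟨hx, hxM⟩
    rw [mem_rootSet] at hx
    refine ⟨⟨x, hxM⟩, ?_, rfl⟩
    exact mem_rootSet.mpr ⟨hx.1, Subtype.val_injective (by rw [← aeval_coe]; exact hx.2)⟩
  · rintro ⟨y, hy, rfl⟩
    exact ⟨rootSet_mapsTo (val M) hy, y.2⟩

theorem ncard_minpoly_rootSet_sep_mem {α : L} (hα : IsIntegral K α) (M : IntermediateField K L) :
    {x ∈ (minpoly K α).rootSet L | x ∈ M}.ncard = Nat.card (K⟮α⟯ →ₐ[K] M) := by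
  rw [rootSet_sep_mem_eq_image, Set.ncard_image_of_injective _ Subtype.val_injective,
    ← Nat.card_coe_set_eq]
  exact (Nat.card_congr <| (algHomAdjoinIntegralEquiv K hα).trans <|
    Equiv.subtypeEquivRight fun _ => by
      classical rw [rootSet_def, Finset.mem_coe, Multiset.mem_toFinset]).symm

end IntermediateField

theorem stmt_12_general (K : Type*) [Field K] (α β : AlgebraicClosure K)
    (h : IntermediateField.adjoin K {α} = IntermediateField.adjoin K {β})
    (M : IntermediateField K (AlgebraicClosure K)) :
    rootCapacity K M α = rootCapacity K M β := by
  rw [rootCapacity, rootCapacity,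
    IntermediateField.ncard_minpoly_rootSet_sep_mem (Algebra.IsIntegral.isIntegral α),
    IntermediateField.ncard_minpoly_rootSet_sep_mem (Algebra.IsIntegral.isIntegral β), h]

/-- Let `K` be a perfect field with algebraic closure `K̄` and `α, β ∈ K̄` with
`K(α) = K(β)`. Then for every extension `M` of `K` inside `K̄`, the number of roots of the
minimal polynomial of `α` over `K` lying in `M` equals the number of roots of the minimal
polynomial of `β` over `K` lying in `M`. -/
theorem stmt_12 (K : Type*) [Field K] [PerfectField K] (α β : AlgebraicClosure K)
    (h : IntermediateField.adjoin K {α} = IntermediateField.adjoin K {β})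
    (M : IntermediateField K (AlgebraicClosure K)) :
    rootCapacity K M α = rootCapacity K M β :=
  stmt_12_general K α β h M
end

section
/- Let K be a perfect field and L/K a nontrivial finite extension inside an algebraic closure K̄. Write L = K(α) for a primitive element α with minimal polynomial f over K, let r = r_K(L) be the cluster size, and let α = α₁, α₂, …, α_r be the roots of f contained in L. Let N be the unique intermediate field of L/K such that L/N is Galois with [L : N] = r. Then N = K(t₁, t₂, …, t_r), where t₁, …, t_r are the elementary symmetric polynomials in α₁, …, α_r. -/
set_option maxHeartbeats 1000000

open Polynomial IntermediateField Module

lemma esymm_map_hom {R S : Type*} [CommRing R] [CommRing S] (f : R →+* S)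
    (s : Multiset R) (n : ℕ) : (s.map f).esymm n = f (s.esymm n) := by
  rw [Multiset.esymm, Multiset.esymm, Multiset.powersetCard_map, Multiset.map_map,
    map_multiset_sum, Multiset.map_map]
  exact congrArg Multiset.sum
    (Multiset.map_congr rfl fun t _ => (map_multiset_prod f t).symm)

/-- Let `K` be a perfect field and `L = K(α)` a nontrivial finite extension
inside `K̄`, with `f` the minimal polynomial of `α` over `K`, `r = r_K(L)` the cluster size,
and `α = α₁, …, α_r` the roots of `f` contained in `L`. Let `N` be the (unique) intermediate
field of `L/K` such that `L/N` is Galois with `[L : N] = r`. Then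
`N = K(t₁, …, t_r)` where `t₁, …, t_r` are the elementary symmetric polynomials in
`α₁, …, α_r`. -/
theorem stmt_16 (K : Type*) [Field K] [PerfectField K]
    (α : AlgebraicClosure K) (hL : IntermediateField.adjoin K {α} ≠ ⊥)
    (r : ℕ) (hr : 0 < r) (αs : Fin r → AlgebraicClosure K)
    (hα0 : αs ⟨0, hr⟩ = α) (hinj : Function.Injective αs)
    (hroots : Set.range αs =
      {x ∈ (minpoly K α).rootSet (AlgebraicClosure K) |
        x ∈ IntermediateField.adjoin K {α}})
    (N : IntermediateField K (AlgebraicClosure K))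
    (hN : N ≤ IntermediateField.adjoin K {α})
    (hgal : IsGalois ↥N ↥(IntermediateField.extendScalars hN))
    (hdeg : Module.finrank ↥N ↥(IntermediateField.extendScalars hN) = r) :
    N = IntermediateField.adjoin K
      (Set.range fun i : Fin r => (Finset.univ.val.map αs).esymm ((i : ℕ) + 1)) := by
  classical
  have hint : IsIntegral K α := Algebra.IsIntegral.isIntegral α
  set L := IntermediateField.adjoin K {α} with hLdef
  set t : Fin r → (AlgebraicClosure K) := fun i => (Finset.univ.val.map αs).esymm ((i : ℕ) + 1) with htdef
  have hmem : ∀ i, αs i ∈ (minpoly K α).rootSet (AlgebraicClosure K) ∧ αs i ∈ L := by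
    intro i
    have h : αs i ∈ Set.range αs := ⟨i, rfl⟩
    rw [hroots] at h; exact h
  set XN := IntermediateField.extendScalars hN with hXdef
  have hXadj : XN = IntermediateField.adjoin ↥N {α} := IntermediateField.extendScalars_adjoin hN
  have hintN : IsIntegral ↥N α := hint.tower_top
  haveI : FiniteDimensional ↥N ↥XN := by
    rw [hXadj]; exact IntermediateField.adjoin.finiteDimensional hintN
  -- Step A : each t i lies in N
  have stepA : ∀ i, t i ∈ N := by
    have hmemX : ∀ i, αs i ∈ XN := fun i => (hmem i).2
    set A : Fin r → ↥XN := fun i => ⟨αs i, hmemX i⟩ with hA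
    have hpne : minpoly K α ≠ 0 := minpoly.ne_zero hint
    have hperm : ∀ σ : ↥XN ≃ₐ[↥N] ↥XN,
        (Finset.univ.val.map A).map σ = Finset.univ.val.map A := by
      intro σ
      have hex : ∀ i, ∃ j, A j = σ (A i) := by
        intro i
        have h1 : ∀ x : ↥XN, Polynomial.aeval ((x : AlgebraicClosure K)) (minpoly K α)
            = XN.val (Polynomial.aeval x (minpoly K α)) := fun x =>
          Polynomial.aeval_algHom_apply (XN.val.restrictScalars K) x _
        have h2 : Polynomial.aeval (σ (A i)) (minpoly K α)
            = σ (Polynomial.aeval (A i) (minpoly K α)) :=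
          Polynomial.aeval_algHom_apply ((σ : ↥XN →ₐ[↥N] ↥XN).restrictScalars K) (A i) _
        have h3 : Polynomial.aeval (A i) (minpoly K α) = 0 := by
          have h4 := (hmem i).1
          rw [Polynomial.mem_rootSet] at h4
          have h5 : XN.val ((Polynomial.aeval (A i)) (minpoly K α)) = 0 := by
            rw [← h1 (A i)]; exact h4.2
          exact Subtype.ext h5
        have hy : ((σ (A i) : ↥XN) : AlgebraicClosure K) ∈ Set.range αs := by
          rw [hroots]
          refine ⟨?_, (σ (A i)).2⟩
          rw [Polynomial.mem_rootSet]
          refine ⟨hpne, ?_⟩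
          rw [h1 (σ (A i)), h2, h3]
          simp
        obtain ⟨j, hj⟩ := hy
        exact ⟨j, Subtype.ext hj⟩
      choose e he using hex
      have einj : Function.Injective e := by
        intro i j hij
        have h6 : σ (A i) = σ (A j) := by rw [← he i, ← he j, hij]
        have h7 := σ.injective h6
        exact hinj (congrArg Subtype.val h7)
      have ebij := Finite.injective_iff_bijective.mp einj
      have huniv : Finset.univ.val.map e = Finset.univ.val := by
        have h8 := Finset.map_univ_equiv (Equiv.ofBijective e ebij)
        exact congrArg Finset.val h8
      calc (Finset.univ.val.map A).map σ
          = Finset.univ.val.map (fun i => σ (A i)) := by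
            rw [Multiset.map_map]; rfl
        _ = Finset.univ.val.map (fun i => A (e i)) :=
            Multiset.map_congr rfl (fun i _ => (he i).symm)
        _ = (Finset.univ.val.map e).map A := by rw [Multiset.map_map]; rfl
        _ = Finset.univ.val.map A := by rw [huniv]
    intro i0
    set T : ↥XN := (Finset.univ.val.map A).esymm ((i0 : ℕ) + 1) with hT
    have hTfix : ∀ σ : ↥XN ≃ₐ[↥N] ↥XN, σ T = T := by
      intro σ
      have h10 := esymm_map_hom (σ : ↥XN →+* ↥XN) (Finset.univ.val.map A) ((i0 : ℕ) + 1)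
      simp only [RingHom.coe_coe] at h10
      rw [hperm σ] at h10
      exact h10.symm
    have hTbot : T ∈ (⊥ : IntermediateField ↥N ↥XN) := by
      have hff : IntermediateField.fixedField (⊤ : Subgroup (↥XN ≃ₐ[↥N] ↥XN)) = ⊥ :=
        ((IsGalois.tfae).out 0 1).mp hgal
      rw [← hff]
      exact fun g => hTfix g
    rw [IntermediateField.mem_bot] at hTbot
    obtain ⟨n, hn⟩ := hTbot
    have hcoeT : t i0 = (T : AlgebraicClosure K) := by
      have h11 := esymm_map_hom (XN.val : ↥XN →+* AlgebraicClosure K)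
        (Finset.univ.val.map A) ((i0 : ℕ) + 1)
      rw [Multiset.map_map] at h11
      exact h11
    rw [hcoeT, ← hn]
    exact n.2
  -- Step B
  set M := IntermediateField.adjoin K (Set.range t) with hMdef
  have hMN : M ≤ N := by
    rw [hMdef, IntermediateField.adjoin_le_iff]
    rintro x ⟨i, rfl⟩; exact stepA i
  have hML : M ≤ L := hMN.trans hN
  haveI : FiniteDimensional K ↥L := IntermediateField.adjoin.finiteDimensional hint
  -- degree of minpoly over M is at most r
  have hintM : IsIntegral ↥M α := hint.tower_top
  have hdM : (minpoly ↥M α).natDegree ≤ r := by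
    set P : ((AlgebraicClosure K))[X] :=
      ((Finset.univ.val.map αs).map (fun a => X - C a)).prod with hP
    have hcard : Multiset.card (Finset.univ.val.map αs) = r := by simp
    have hmonicP : P.Monic :=
      monic_multiset_prod_of_monic _ _ (fun a _ => monic_X_sub_C a)
    have hdegP : P.natDegree = r := by
      rw [hP, natDegree_multiset_prod_X_sub_C_eq_card, hcard]
    have hevalP : P.eval α = 0 := by
      rw [hP, eval_multiset_prod]
      refine Multiset.prod_eq_zero ?_
      rw [Multiset.map_map, Multiset.map_map]
      refine Multiset.mem_map.mpr ⟨⟨0, hr⟩, Finset.mem_univ_val _, ?_⟩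
      simp [hα0]
    have hcoeff : ∀ n, P.coeff n ∈ M := by
      intro n
      rcases lt_or_ge n r with h | h
      · rw [hP, Multiset.prod_X_sub_C_coeff _ (by rw [hcard]; omega), hcard]
        refine mul_mem (pow_mem (neg_mem (one_mem M)) _) ?_
        have hmem2 : t ⟨r - n - 1, by omega⟩ ∈ M :=
          IntermediateField.subset_adjoin K (Set.range t) ⟨⟨r - n - 1, by omega⟩, rfl⟩
        have he : (Finset.univ.val.map αs).esymm (r - n) = t ⟨r - n - 1, by omega⟩ := by
          rw [htdef]
          congr 1
          simp only []
          omega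
        rw [he]; exact hmem2
      · rcases eq_or_lt_of_le h with he | hl
        · rw [he] at hdegP
          rw [← hdegP, hmonicP.coeff_natDegree]
          exact one_mem M
        · rw [Polynomial.coeff_eq_zero_of_natDegree_lt (by omega)]
          exact zero_mem M
    have hlift : P ∈ Polynomial.lifts (algebraMap ↥M ((AlgebraicClosure K))) := by
      rw [Polynomial.lifts_iff_coeff_lifts]
      intro n; exact ⟨⟨P.coeff n, hcoeff n⟩, rfl⟩
    obtain ⟨q, hq1, hq2, hq3⟩ := Polynomial.lifts_and_degree_eq_and_monic hlift hmonicP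
    have hq0 : (Polynomial.aeval α) q = 0 := by
      rw [Polynomial.aeval_def, ← Polynomial.eval_map, hq1, hevalP]
    have hle := minpoly.degree_le_of_ne_zero ↥M α hq3.ne_zero hq0
    have hdq : q.natDegree = r := by
      rw [← hdegP]; exact natDegree_eq_of_degree_eq hq2
    calc (minpoly ↥M α).natDegree ≤ q.natDegree := natDegree_le_natDegree hle
      _ = r := hdq
  -- finrank over extendScalars equals minpoly degree
  set Y := IntermediateField.extendScalars hML with hYdef
  have hYadj : Y = IntermediateField.adjoin ↥M {α} := IntermediateField.extendScalars_adjoin hML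
  have hfinY : Module.finrank ↥M ↥Y ≤ r := by
    rw [hYadj, IntermediateField.adjoin.finrank hintM]; exact hdM
  -- identify finrank K X = finrank K L and finrank K Y = finrank K L
  have hXL : Module.finrank K ↥XN = Module.finrank K ↥L := rfl
  have hYL : Module.finrank K ↥Y = Module.finrank K ↥L := rfl
  have towN : Module.finrank K ↥N * Module.finrank ↥N ↥XN = Module.finrank K ↥XN :=
    Module.finrank_mul_finrank K ↥N ↥XN
  have towM : Module.finrank K ↥M * Module.finrank ↥M ↥Y = Module.finrank K ↥Y :=
    Module.finrank_mul_finrank K ↥M ↥Y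
  haveI : FiniteDimensional K ↥N := by
    haveI : FiniteDimensional K ↥L.toSubmodule := by assumption
    have h2 : N.toSubmodule ≤ L.toSubmodule := hN
    exact Submodule.finiteDimensional_of_le h2
  have hLpos : 0 < Module.finrank K ↥L := Module.finrank_pos
  -- arithmetic
  have hfin : Module.finrank K ↥N ≤ Module.finrank K ↥M := by
    have h1 : Module.finrank K ↥N * r = Module.finrank K ↥L := by rw [← hdeg]; rw [towN] at *; omega
    have h2 : Module.finrank K ↥M * Module.finrank ↥M ↥Y = Module.finrank K ↥L := by
      rw [towM, hYL]
    nlinarith [hfinY, hLpos]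
  exact (IntermediateField.eq_of_le_of_finrank_le hMN hfin).symm
end
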